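/- arXiv:1812.04531 — 2 statements merged into one kernel-verified Lean document; each statement's English description precedes it below -/
import Mathlib

section
/- Let r, p, n be positive integers with p dividing r and let k be a nonnegative integer. Then the ℂ-linear span of {φ_{k+1}(x_d) : d ∈ A_{k+1/2}(r,p,n)} in End(V^{⊗(k+1)}) is closed under composition. -/
open scoped Classical
open Matrix

noncomputable section

namespace Tanabe

/-! ## Tensor space model of `V^{⊗k}` for `V = ℂ^n`.
A tensor is encoded by its coordinates, i.e. a function `(Fin k → Fin n) → ℂ`;
the basis vector `v_{i_1} ⊗ ⋯ ⊗ v_{i_k}` corresponds to the indicator function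
of the tuple `(i_1, …, i_k)`. -/

abbrev TP (n k : ℕ) : Type := (Fin k → Fin n) → ℂ

/-- The linear endomorphism of `V^{⊗k}` with matrix `K` in the standard basis:
it sends the basis vector indexed by the tuple `i` to `∑ₒ K o i • (basis vector o)`. -/
def kernelMap (n k : ℕ) (K : (Fin k → Fin n) → (Fin k → Fin n) → ℂ) :
    TP n k →ₗ[ℂ] TP n k where
  toFun f := fun o => ∑ i : Fin k → Fin n, K o i * f i
  map_add' f g := by
    funext o
    simp only [Pi.add_apply, mul_add]
    exact Finset.sum_add_distrib
  map_smul' c f := by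
    funext o
    simp only [Pi.smul_apply, smul_eq_mul, RingHom.id_apply]
    rw [Finset.mul_sum]
    exact Finset.sum_congr rfl fun i _ => by ring

/-- The diagonal (tensor-power) action `g^{⊗k}` of a matrix `g` on `V^{⊗k}`. -/
def tensorPow (n k : ℕ) (g : Matrix (Fin n) (Fin n) ℂ) : TP n k →ₗ[ℂ] TP n k :=
  kernelMap n k fun o i => ∏ t : Fin k, g (o t) (i t)

/-! ## Set partitions of `{1,…,t,1′,…,t′}`.
A set partition of `{1,…,t,1′,…,t′}` is encoded as a `Setoid` on `Fin t ⊕ Fin t`,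
with `Sum.inl` the unprimed (top row) elements and `Sum.inr` the primed (bottom row)
elements; blocks are the equivalence classes. -/

abbrev SP (t : ℕ) : Type := Setoid (Fin t ⊕ Fin t)

/-- `N(B)`: number of top-row (unprimed) elements in the block `q` of `d`. -/
def topCt {t : ℕ} (d : SP t) (q : Quotient d) : ℕ :=
  Nat.card {a : Fin t // Quotient.mk d (Sum.inl a) = q}

/-- `M(B)`: number of bottom-row (primed) elements in the block `q` of `d`. -/
def botCt {t : ℕ} (d : SP t) (q : Quotient d) : ℕ :=
  Nat.card {a : Fin t // Quotient.mk d (Sum.inr a) = q}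

/-- `|d|`: the number of blocks of `d`. -/
def nBlocks {t : ℕ} (d : SP t) : ℕ := Nat.card (Quotient d)

/-- Coefficient of `φ_t(x_d)`: equals `1` if the equalities among the values of the
combined tuple `c` are *exactly* those prescribed by `d`, and `0` otherwise. -/
def coeX (n t : ℕ) (d : SP t) (c : Fin t ⊕ Fin t → Fin n) : ℂ :=
  if ∀ a b : Fin t ⊕ Fin t, d.r a b ↔ c a = c b then 1 else 0

/-- Coefficient of `φ_t(d)` (the diagram basis): equals `1` if the values of the
combined tuple `c` agree on each block of `d`, and `0` otherwise. -/
def coeD (n t : ℕ) (d : SP t) (c : Fin t ⊕ Fin t → Fin n) : ℂ :=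
  if ∀ a b : Fin t ⊕ Fin t, d.r a b → c a = c b then 1 else 0

/-- The operator `φ_t(x_d)` on `V^{⊗t}`. -/
def phiX (n t : ℕ) (d : SP t) : TP n t →ₗ[ℂ] TP n t :=
  kernelMap n t fun o i => coeX n t d (Sum.elim i o)

/-- The operator `φ_t(d)` on `V^{⊗t}` (diagram basis). -/
def phiD (n t : ℕ) (d : SP t) : TP n t →ₗ[ℂ] TP n t :=
  kernelMap n t fun o i => coeD n t d (Sum.elim i o)

/-- `d ∈ Π_t(r)` : every block `B` satisfies `N(B) ≡ M(B) (mod r)`. -/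
def inPi (r : ℕ) {t : ℕ} (d : SP t) : Prop :=
  ∀ q : Quotient d, (topCt d q : ℤ) ≡ (botCt d q : ℤ) [ZMOD (r : ℤ)]

/-- `d ∈ Λ_t(r,p,n)` (here `m = r/p`). -/
def inLambda (r p n : ℕ) {t : ℕ} (d : SP t) : Prop :=
  nBlocks d = n ∧
  (∀ q : Quotient d,
    ((topCt d q : ℤ) ≡ (botCt d q : ℤ) [ZMOD ((r / p : ℕ) : ℤ)]) ∧
    ¬ ((topCt d q : ℤ) ≡ (botCt d q : ℤ) [ZMOD (r : ℤ)])) ∧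
  (∀ q q' : Quotient d,
    (topCt d q : ℤ) - (botCt d q : ℤ) ≡ (topCt d q' : ℤ) - (botCt d q' : ℤ) [ZMOD (r : ℤ)])

/-- `d ∈ Θ_t(r,p,n)` (here `m = r/p`). -/
def inTheta (r p n : ℕ) {t : ℕ} (d : SP t) : Prop :=
  n < nBlocks d ∧
  (∀ q : Quotient d, (topCt d q : ℤ) ≡ (botCt d q : ℤ) [ZMOD ((r / p : ℕ) : ℤ)]) ∧
  ∃ q : Quotient d, ¬ ((topCt d q : ℤ) ≡ (botCt d q : ℤ) [ZMOD (r : ℤ)])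

/-- `d ∈ A_t(r,p,n) = Π_t(r) ∪ Λ_t(r,p,n) ∪ Θ_t(r,p,n)`. -/
def inA (r p n : ℕ) {t : ℕ} (d : SP t) : Prop :=
  inPi r d ∨ inLambda r p n d ∨ inTheta r p n d

/-- `d ∈ A_{k+1/2}` : `k+1` and `(k+1)′` lie in the same block. -/
def isHalf (k : ℕ) (d : SP (k + 1)) : Prop :=
  d.r (Sum.inl (Fin.last k)) (Sum.inr (Fin.last k))

/-- `d ∈ Π_t(r,p,n)` : `d ∈ A_t(r,p,n)` with at most `n` blocks. -/
def inPiRPN (r p n : ℕ) {t : ℕ} (d : SP t) : Prop :=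
  inA r p n d ∧ nBlocks d ≤ n

/-- `{φ_k(x_d) : d ∈ A_k(r,p,n)}`. -/
def TanSet (r p n k : ℕ) : Set (TP n k →ₗ[ℂ] TP n k) :=
  {T | ∃ d : SP k, inA r p n d ∧ T = phiX n k d}

/-- `{φ_{k+1}(x_d) : d ∈ A_{k+1/2}(r,p,n)}` (as endomorphisms of `V^{⊗(k+1)}`). -/
def TanSetHalf (r p n k : ℕ) : Set (TP n (k + 1) →ₗ[ℂ] TP n (k + 1)) :=
  {T | ∃ d : SP (k + 1), (inA r p n d ∧ isHalf k d) ∧ T = phiX n (k + 1) d}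

/-! ## The groups `G(r,p,n)` and `L(r,p,n)` as matrix groups. -/

/-- The monomial matrix with underlying permutation `π` and weights `a` :
its `(i,j)` entry is `a j` if `i = π j` and `0` otherwise, so that it maps
`v_j ↦ a j • v_{π j}`. -/
def monoMat (n : ℕ) (π : Equiv.Perm (Fin n)) (a : Fin n → ℂ) :
    Matrix (Fin n) (Fin n) ℂ :=
  Matrix.of fun i j => if i = π j then a j else 0

/-- `G(r,p,n)` as a set of matrices: matrices with exactly one nonzero entry in each
row and column, whose nonzero entries are `r`-th roots of unity, and such that the
`m = r/p`-th power of the product of the nonzero entries is `1`. -/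
def GSet (r p n : ℕ) : Set (Matrix (Fin n) (Fin n) ℂ) :=
  {g | ∃ (π : Equiv.Perm (Fin n)) (a : Fin n → ℂ),
    (∀ i, a i ^ r = 1) ∧ (∏ i, a i) ^ (r / p) = 1 ∧ g = monoMat n π a}

/-- The last index of `Fin n` (position `n` in 1-indexed notation). -/
def lastIdx (n : ℕ) (hn : 0 < n) : Fin n := ⟨n - 1, by omega⟩

/-- `L(r,p,n)` as a set of matrices: elements of `G(r,p,n)` whose `(n,n)` entry
is nonzero. -/
def LSet (r p n : ℕ) (hn : 0 < n) : Set (Matrix (Fin n) (Fin n) ℂ) :=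
  {g | g ∈ GSet r p n ∧ g (lastIdx n hn) (lastIdx n hn) ≠ 0}

/-- The centralizer algebra `End_{G(r,p,n)}(V^{⊗k})`. -/
def centG (r p n k : ℕ) : Set (TP n k →ₗ[ℂ] TP n k) :=
  {F | ∀ g ∈ GSet r p n, F ∘ₗ tensorPow n k g = tensorPow n k g ∘ₗ F}

/-- The subspace `W = V^{⊗k} ⊗ ℂ v_n` of `V^{⊗(k+1)}` : coordinate functions
supported on tuples whose last entry is the last index. -/
def Wsub (n k : ℕ) (hn : 0 < n) : Submodule ℂ (TP n (k + 1)) where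
  carrier := {f | ∀ j : Fin (k + 1) → Fin n, j (Fin.last k) ≠ lastIdx n hn → f j = 0}
  add_mem' := by
    intro a b ha hb j hj
    simp [Pi.add_apply, ha j hj, hb j hj]
  zero_mem' := by intro j hj; rfl
  smul_mem' := by
    intro c a ha j hj
    simp [Pi.smul_apply, ha j hj]


/-! ## Group structure -/

abbrev GLn (n : ℕ) := Matrix.GeneralLinearGroup (Fin n) ℂ

lemma monoMat_mul (n : ℕ) (π σ : Equiv.Perm (Fin n)) (a b : Fin n → ℂ) :
    monoMat n π a * monoMat n σ b = monoMat n (π * σ) (fun j => a (σ j) * b j) := by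
  ext i j
  simp only [monoMat, Matrix.mul_apply, Matrix.of_apply, mul_ite, mul_zero, ite_mul, zero_mul]
  rw [Finset.sum_ite_eq' Finset.univ (σ j)]
  simp [Equiv.Perm.mul_apply]
  congr

lemma monoMat_one (n : ℕ) : monoMat n 1 (fun _ => (1 : ℂ)) = 1 := by
  ext i j
  simp [monoMat, Matrix.one_apply]
  congr

lemma one_mem_GSet (r p n : ℕ) : (1 : Matrix (Fin n) (Fin n) ℂ) ∈ GSet r p n :=
  ⟨1, fun _ => 1, fun _ => one_pow r, by simp, (monoMat_one n).symm⟩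

lemma mul_mem_GSet {r p n : ℕ} {g h : Matrix (Fin n) (Fin n) ℂ}
    (hg : g ∈ GSet r p n) (hh : h ∈ GSet r p n) : g * h ∈ GSet r p n := by
  obtain ⟨π, a, ha, hpa, rfl⟩ := hg
  obtain ⟨σ, b, hb, hpb, rfl⟩ := hh
  refine ⟨π * σ, fun j => a (σ j) * b j, fun i => by rw [mul_pow, ha, hb, one_mul], ?_,
    monoMat_mul n π σ a b⟩
  have h1 : (∏ i, (a (σ i) * b i)) = (∏ i, a i) * ∏ i, b i := by
    rw [Finset.prod_mul_distrib, Equiv.prod_comp σ a]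
  rw [h1, mul_pow, hpa, hpb, one_mul]

lemma a_ne_zero {r : ℕ} (hr : 0 < r) {a : ℂ} (ha : a ^ r = 1) : a ≠ 0 := by
  intro h0
  rw [h0, zero_pow hr.ne'] at ha
  exact zero_ne_one ha

lemma monoMat_mul_inv (n : ℕ) (π : Equiv.Perm (Fin n)) (a : Fin n → ℂ)
    (ha : ∀ i, a i ≠ 0) :
    monoMat n π a * monoMat n π⁻¹ (fun j => (a (π⁻¹ j))⁻¹) = 1 := by
  simp only [monoMat_mul]
  rw [mul_inv_cancel,
    show (fun j => a (π⁻¹ j) * (a (π⁻¹ j))⁻¹) = fun _ : Fin n => (1 : ℂ) from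
      funext fun j => mul_inv_cancel₀ (ha _),
    monoMat_one]

/-- The value of the inverse of a unit whose underlying matrix is a monomial matrix. -/
lemma gl_inv_val {n : ℕ} (g : GLn n) (π : Equiv.Perm (Fin n)) (a : Fin n → ℂ)
    (ha : ∀ i, a i ≠ 0) (hg : (↑g : Matrix (Fin n) (Fin n) ℂ) = monoMat n π a) :
    (↑g⁻¹ : Matrix (Fin n) (Fin n) ℂ) = monoMat n π⁻¹ (fun j => (a (π⁻¹ j))⁻¹) := by
  have hmul : (↑g : Matrix (Fin n) (Fin n) ℂ) *
      monoMat n π⁻¹ (fun j => (a (π⁻¹ j))⁻¹) = 1 := by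
    rw [hg]; exact monoMat_mul_inv n π a ha
  calc (↑g⁻¹ : Matrix (Fin n) (Fin n) ℂ)
      = ↑g⁻¹ * ((↑g : Matrix (Fin n) (Fin n) ℂ) *
          monoMat n π⁻¹ (fun j => (a (π⁻¹ j))⁻¹)) := by rw [hmul, mul_one]
    _ = ((↑g⁻¹ : Matrix (Fin n) (Fin n) ℂ) * ↑g) *
          monoMat n π⁻¹ (fun j => (a (π⁻¹ j))⁻¹) := by rw [mul_assoc]
    _ = monoMat n π⁻¹ (fun j => (a (π⁻¹ j))⁻¹) := by
          rw [← Units.val_mul, inv_mul_cancel, Units.val_one, one_mul]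

lemma inv_mem_GSet {r p n : ℕ} (hr : 0 < r) {g : GLn n}
    (hg : (↑g : Matrix (Fin n) (Fin n) ℂ) ∈ GSet r p n) :
    (↑g⁻¹ : Matrix (Fin n) (Fin n) ℂ) ∈ GSet r p n := by
  obtain ⟨π, a, ha, hpa, hgm⟩ := hg
  have hane : ∀ i, a i ≠ 0 := fun i => a_ne_zero hr (ha i)
  refine ⟨π⁻¹, fun j => (a (π⁻¹ j))⁻¹, fun i => by rw [inv_pow, ha, inv_one], ?_,
    gl_inv_val g π a hane hgm⟩
  rw [Finset.prod_inv_distrib, Equiv.prod_comp π⁻¹ a, inv_pow, hpa, inv_one]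

/-- The complex reflection group `G(r,p,n)` as a subgroup of `GL_n(ℂ)`. -/
def GGroup (r p n : ℕ) (hr : 0 < r) : Subgroup (GLn n) where
  carrier := {g | (↑g : Matrix (Fin n) (Fin n) ℂ) ∈ GSet r p n}
  one_mem' := by
    show (↑(1 : GLn n) : Matrix (Fin n) (Fin n) ℂ) ∈ GSet r p n
    rw [Units.val_one]; exact one_mem_GSet r p n
  mul_mem' := by
    intro g h hg hh
    show (↑(g * h) : Matrix (Fin n) (Fin n) ℂ) ∈ GSet r p n
    rw [Units.val_mul]; exact mul_mem_GSet hg hh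
  inv_mem' := by
    intro g hg
    exact inv_mem_GSet hr hg

lemma monoMat_last {n : ℕ} (hn : 0 < n) (π : Equiv.Perm (Fin n)) (a : Fin n → ℂ)
    (h : monoMat n π a (lastIdx n hn) (lastIdx n hn) ≠ 0) :
    π (lastIdx n hn) = lastIdx n hn ∧ a (lastIdx n hn) ≠ 0 := by
  by_cases hp : lastIdx n hn = π (lastIdx n hn)
  · refine ⟨hp.symm, ?_⟩
    intro h0
    apply h
    simp [monoMat, ← hp, h0]
  · exfalso; apply h; simp [monoMat, hp]

lemma monoMat_last_entry {n : ℕ} (hn : 0 < n) (π : Equiv.Perm (Fin n)) (a : Fin n → ℂ)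
    (hp : π (lastIdx n hn) = lastIdx n hn) :
    monoMat n π a (lastIdx n hn) (lastIdx n hn) = a (lastIdx n hn) := by
  simp [monoMat, hp]

/-- The subgroup `L(r,p,n)` of `G(r,p,n)` (matrices with nonzero `(n,n)` entry). -/
def LGroup (r p n : ℕ) (hr : 0 < r) (hn : 0 < n) : Subgroup (GLn n) where
  carrier := {g | (↑g : Matrix (Fin n) (Fin n) ℂ) ∈ LSet r p n hn}
  one_mem' := by
    refine ⟨?_, ?_⟩
    · show (↑(1 : GLn n) : Matrix (Fin n) (Fin n) ℂ) ∈ GSet r p n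
      rw [Units.val_one]; exact one_mem_GSet r p n
    · rw [Units.val_one]
      simp [Matrix.one_apply]
  mul_mem' := by
    rintro g h ⟨hg, hge⟩ ⟨hh, hhe⟩
    refine ⟨?_, ?_⟩
    · show (↑(g * h) : Matrix (Fin n) (Fin n) ℂ) ∈ GSet r p n
      rw [Units.val_mul]; exact mul_mem_GSet hg hh
    · obtain ⟨π, a, ha, hpa, hgm⟩ := hg
      obtain ⟨σ, b, hb, hpb, hhm⟩ := hh
      rw [hgm] at hge
      rw [hhm] at hhe
      obtain ⟨hπ, ha0⟩ := monoMat_last hn π a hge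
      obtain ⟨hσ, hb0⟩ := monoMat_last hn σ b hhe
      rw [Units.val_mul, hgm, hhm, monoMat_mul]
      rw [monoMat_last_entry hn _ _ (by simp [Equiv.Perm.mul_apply, hσ, hπ])]
      simp only [hσ]
      exact mul_ne_zero ha0 hb0
  inv_mem' := by
    rintro g ⟨hg, hge⟩
    obtain ⟨π, a, ha, hpa, hgm⟩ := hg
    have hane : ∀ i, a i ≠ 0 := fun i => a_ne_zero hr (ha i)
    rw [hgm] at hge
    obtain ⟨hπ, ha0⟩ := monoMat_last hn π a hge
    refine ⟨inv_mem_GSet hr ⟨π, a, ha, hpa, hgm⟩, ?_⟩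
    rw [gl_inv_val g π a hane hgm]
    have hπi : π⁻¹ (lastIdx n hn) = lastIdx n hn := by
      conv_lhs => rw [← hπ]
      simp
    rw [monoMat_last_entry hn _ _ hπi]
    simp only [hπi]
    exact inv_ne_zero ha0

lemma GGroup_le (r p n : ℕ) (hr : 0 < r) : GGroup r p n hr ≤ GGroup r 1 n hr := by
  rintro g ⟨π, a, ha, hpa, hgm⟩
  refine ⟨π, a, ha, ?_, hgm⟩
  rw [Nat.div_one, ← Finset.prod_pow]
  simp [ha]

lemma LGroup_le (r p n : ℕ) (hr : 0 < r) (hn : 0 < n) :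
    LGroup r p n hr hn ≤ LGroup r 1 n hr hn := by
  rintro g ⟨hg, hge⟩
  exact ⟨GGroup_le r p n hr hg, hge⟩

lemma LGroup_le_GGroup (r p n : ℕ) (hr : 0 < r) (hn : 0 < n) :
    LGroup r p n hr hn ≤ GGroup r p n hr := fun _ hg => hg.1

lemma LGroup_le_G1 (r p n : ℕ) (hr : 0 < r) (hn : 0 < n) :
    LGroup r p n hr hn ≤ GGroup r 1 n hr :=
  le_trans (LGroup_le_GGroup r p n hr hn) (GGroup_le r p n hr)

/-! ## Representation-theoretic notions -/

section Reps

variable {G : Type*} [Monoid G] {V : Type*} [AddCommGroup V] [Module ℂ V]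

/-- A submodule invariant under a representation. -/
def RepInvariant (ρ : Representation ℂ G V) (q : Submodule ℂ V) : Prop :=
  ∀ (g : G), ∀ v ∈ q, ρ g v ∈ q

/-- Irreducibility of a representation. -/
def RepIrreducible (ρ : Representation ℂ G V) : Prop :=
  Nontrivial V ∧ ∀ q : Submodule ℂ V, RepInvariant ρ q → q = ⊥ ∨ q = ⊤

/-- Irreducibility of an invariant subspace, as a subrepresentation. -/
def SubIrreducible (ρ : Representation ℂ G V) (q : Submodule ℂ V) : Prop :=
  q ≠ ⊥ ∧ ∀ q' : Submodule ℂ V, q' ≤ q → RepInvariant ρ q' → q' = ⊥ ∨ q' = q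

/-- Two (invariant) subspaces are isomorphic as subrepresentations: there is a
`ℂ`-linear equivalence between them intertwining the action. -/
def IsSubrepIso (ρ : Representation ℂ G V) (q q' : Submodule ℂ V) : Prop :=
  ∃ e : q ≃ₗ[ℂ] q', ∀ (g : G) (x : V) (hx : x ∈ q) (hgx : ρ g x ∈ q),
    ((e ⟨ρ g x, hgx⟩ : q') : V) = ρ g ((e ⟨x, hx⟩ : q') : V)

/-- A representation is multiplicity free: it is an (internal) direct sum of
pairwise non-isomorphic irreducible subrepresentations. -/
def RepMultFree (ρ : Representation ℂ G V) : Prop :=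
  ∃ (ι : Type) (_ : Fintype ι) (W : ι → Submodule ℂ V),
    (∀ i, RepInvariant ρ (W i)) ∧
    (∀ i, SubIrreducible ρ (W i)) ∧
    iSupIndep W ∧ (⨆ i, W i) = ⊤ ∧
    (∀ i j, i ≠ j → ¬ IsSubrepIso ρ (W i) (W j))

/-- Restriction of a representation of `K` to a subgroup `H ≤ K`. -/
def restrictRep {G : Type*} [Group G] {H K : Subgroup G} (h : H ≤ K)
    (ρ : Representation ℂ ↥K V) : Representation ℂ ↥H V :=
  MonoidHom.comp ρ (Subgroup.inclusion h)

end Reps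

/-! ## The elements `ζ_i^l ζ_j^{-l} s_{ij}` and the central elements `κ` -/

/-- `ζ = exp(2πi/r)`, a primitive `r`-th root of unity. -/
def zeta (r : ℕ) : ℂ := Complex.exp (2 * Real.pi * Complex.I / r)

lemma zeta_pow_self {r : ℕ} (hr : 0 < r) : zeta r ^ r = 1 := by
  rw [zeta, ← Complex.exp_nat_mul]
  rw [show (r : ℂ) * (2 * Real.pi * Complex.I / r) = 2 * Real.pi * Complex.I by
    rw [mul_div_assoc']
    exact mul_div_cancel_left₀ _ (Nat.cast_ne_zero.mpr hr.ne')]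
  exact Complex.exp_two_pi_mul_I

lemma zeta_ne_zero (r : ℕ) : zeta r ≠ 0 := Complex.exp_ne_zero _

/-- Weights of the monomial matrix `ζ_i^l ζ_j^{-l} s_{ij}` : `ζ^l` in position `i`,
`ζ^{-l}` in position `j`, `1` elsewhere. -/
def zijWt (r l : ℕ) {n : ℕ} (i j : Fin n) : Fin n → ℂ :=
  fun t => if t = i then zeta r ^ l else if t = j then (zeta r ^ l)⁻¹ else 1

/-- The matrix `ζ_i^l ζ_j^{-l} s_{ij}`. -/
def zijMat (n r l : ℕ) (i j : Fin n) : Matrix (Fin n) (Fin n) ℂ :=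
  monoMat n (Equiv.swap i j) (zijWt r l i j)

lemma zijWt_ne_zero (r l : ℕ) {n : ℕ} (i j : Fin n) (t : Fin n) :
    zijWt r l i j t ≠ 0 := by
  unfold zijWt
  split_ifs
  · exact pow_ne_zero _ (zeta_ne_zero r)
  · exact inv_ne_zero (pow_ne_zero _ (zeta_ne_zero r))
  · exact one_ne_zero

lemma zijWt_pow {r l : ℕ} (hr : 0 < r) {n : ℕ} (i j : Fin n) (t : Fin n) :
    zijWt r l i j t ^ r = 1 := by
  unfold zijWt
  split_ifs
  · rw [← pow_mul, mul_comm, pow_mul, zeta_pow_self hr, one_pow]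
  · rw [inv_pow, ← pow_mul, mul_comm, pow_mul, zeta_pow_self hr, one_pow, inv_one]
  · exact one_pow r

lemma zijWt_prod {r l : ℕ} {n : ℕ} {i j : Fin n} (hij : i ≠ j) :
    (∏ t, zijWt r l i j t) = 1 := by
  have hfun : (fun t => zijWt r l i j t) =
      fun t => (if t = i then zeta r ^ l else 1) * (if t = j then (zeta r ^ l)⁻¹ else 1) := by
    funext t
    by_cases h1 : t = i <;> by_cases h2 : t = j
    · exact absurd (h1.symm.trans h2) hij
    · simp [zijWt, h1, h2, hij]
    · simp [zijWt, h1, h2, hij, Ne.symm hij]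
    · simp [zijWt, h1, h2]
  rw [hfun, Finset.prod_mul_distrib, Finset.prod_ite_eq' Finset.univ i,
    Finset.prod_ite_eq' Finset.univ j]
  simp [mul_inv_cancel₀ (pow_ne_zero l (zeta_ne_zero r))]

lemma zij_mem_GSet (r p n l : ℕ) (hr : 0 < r) (i j : Fin n) (hij : i ≠ j) :
    zijMat n r l i j ∈ GSet r p n := by
  refine ⟨Equiv.swap i j, zijWt r l i j, zijWt_pow hr i j, ?_, rfl⟩
  rw [zijWt_prod hij, one_pow]

/-- A monomial matrix with nonzero weights, as an element of `GL_n(ℂ)`. -/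
def monoUnit (n : ℕ) (π : Equiv.Perm (Fin n)) (a : Fin n → ℂ) (ha : ∀ i, a i ≠ 0) :
    GLn n where
  val := monoMat n π a
  inv := monoMat n π⁻¹ (fun j => (a (π⁻¹ j))⁻¹)
  val_inv := monoMat_mul_inv n π a ha
  inv_val := by
    simp only [monoMat_mul]
    rw [inv_mul_cancel,
      show (fun j => (a (π⁻¹ (π j)))⁻¹ * a j) = fun _ : Fin n => (1 : ℂ) from
        funext fun j => by rw [Equiv.Perm.inv_def, Equiv.symm_apply_apply, inv_mul_cancel₀ (ha _)],
      monoMat_one]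

/-- The element `ζ_i^l ζ_j^{-l} s_{ij}` of `G(r,p,n)`. -/
def zijG (r p n l : ℕ) (hr : 0 < r) (i j : Fin n) (hij : i ≠ j) : ↥(GGroup r p n hr) :=
  ⟨monoUnit n (Equiv.swap i j) (zijWt r l i j) (zijWt_ne_zero r l i j),
   zij_mem_GSet r p n l hr i j hij⟩

/-- The element `κ_{r,n} = (1/r)·Σ_{l<r} Σ_{i<j} ζ_i^l ζ_j^{-l} s_{ij}` of the group
algebra `ℂ[G(r,p,n)]`. -/
def kappaGA (r p n : ℕ) (hr : 0 < r) : MonoidAlgebra ℂ ↥(GGroup r p n hr) :=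
  (1 / (r : ℂ)) • ∑ l ∈ Finset.range r, ∑ i : Fin n, ∑ j : Fin n,
    if h : i < j then MonoidAlgebra.single (zijG r p n l hr i j h.ne) 1 else 0

lemma zijL_last (r l : ℕ) {n : ℕ} (hn : 0 < n) (i j : Fin n)
    (hi : i ≠ lastIdx n hn) (hj : j ≠ lastIdx n hn) :
    zijMat n r l i j (lastIdx n hn) (lastIdx n hn) ≠ 0 := by
  have hswap : Equiv.swap i j (lastIdx n hn) = lastIdx n hn :=
    Equiv.swap_apply_of_ne_of_ne (Ne.symm hi) (Ne.symm hj)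
  rw [zijMat, monoMat_last_entry hn _ _ hswap]
  exact zijWt_ne_zero r l i j _

/-- The element `ζ_i^l ζ_j^{-l} s_{ij}` of `L(r,p,n)`, for `i, j ≤ n-1`. -/
def zijL (r p n l : ℕ) (hr : 0 < r) (hn : 0 < n) (i j : Fin n) (hij : i ≠ j)
    (hi : i ≠ lastIdx n hn) (hj : j ≠ lastIdx n hn) : ↥(LGroup r p n hr hn) :=
  ⟨monoUnit n (Equiv.swap i j) (zijWt r l i j) (zijWt_ne_zero r l i j),
   ⟨zij_mem_GSet r p n l hr i j hij, zijL_last r l hn i j hi hj⟩⟩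

/-- The element `κ_{r,n-1} = (1/r)·Σ_{l<r} Σ_{1≤i<j≤n-1} ζ_i^l ζ_j^{-l} s_{ij}` of the
group algebra `ℂ[L(r,p,n)]`. -/
def kappaLA (r p n : ℕ) (hr : 0 < r) (hn : 0 < n) :
    MonoidAlgebra ℂ ↥(LGroup r p n hr hn) :=
  (1 / (r : ℂ)) • ∑ l ∈ Finset.range r, ∑ i : Fin n, ∑ j : Fin n,
    if h : i < j ∧ (j : ℕ) < n - 1 then
      MonoidAlgebra.single
        (zijL r p n l hr hn i j h.1.ne
          (by
            refine Fin.ne_of_val_ne ?_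
            have h1 : (i : ℕ) < (j : ℕ) := h.1
            have h2 : (j : ℕ) < n - 1 := h.2
            show (i : ℕ) ≠ n - 1
            omega)
          (by
            refine Fin.ne_of_val_ne ?_
            have h2 : (j : ℕ) < n - 1 := h.2
            show (j : ℕ) ≠ n - 1
            omega)) 1
    else 0

/-! ## The induced representation of statement on `Ind_L^G σ` -/

/-- The right regular representation of a group `G` on the space of functions
`G → ℂ`, given by `(x · f)(g) = f(g x)`. -/
def regRep (G : Type*) [Group G] : Representation ℂ G (G → ℂ) where
  toFun x :=
    { toFun := fun f => fun g => f (g * x)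
      map_add' := fun f g => rfl
      map_smul' := fun c f => rfl }
  map_one' := by
    refine LinearMap.ext fun f => ?_
    funext g
    simp
  map_mul' x y := by
    refine LinearMap.ext fun f => ?_
    funext g
    simp [Module.End.mul_apply, mul_assoc]

/-- The space of functions `f : G(r,p,n) → ℂ` with `f(hg) = σ(h)·f(g)` for all
`h ∈ L(r,p,n)`, where `σ(h)` is the `(n,n)` entry of `h`. -/
def IndSig (r p n : ℕ) (hr : 0 < r) (hn : 0 < n) :
    Submodule ℂ (↥(GGroup r p n hr) → ℂ) where
  carrier := {f | ∀ h g : ↥(GGroup r p n hr),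
    ((h : GLn n) : Matrix (Fin n) (Fin n) ℂ) ∈ LSet r p n hn →
    f (h * g) = ((h : GLn n) : Matrix (Fin n) (Fin n) ℂ) (lastIdx n hn) (lastIdx n hn) * f g}
  add_mem' := by
    intro a b ha hb h g hh
    simp [ha h g hh, hb h g hh, mul_add]
  zero_mem' := by intro h g hh; simp
  smul_mem' := by
    intro c a ha h g hh
    simp [ha h g hh]
    ring

lemma IndSig_invariant (r p n : ℕ) (hr : 0 < r) (hn : 0 < n) :
    RepInvariant (regRep ↥(GGroup r p n hr)) (IndSig r p n hr hn) := by
  intro x f hf h g hh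
  show f ((h * g) * x) = _ * f (g * x)
  rw [mul_assoc]
  exact hf h (g * x) hh

/-- The natural representation of `G(r,p,n)` on `ℂ^n` by matrix-vector
multiplication. -/
def natRep (r p n : ℕ) (hr : 0 < r) : Representation ℂ ↥(GGroup r p n hr) (Fin n → ℂ) where
  toFun g := Matrix.mulVecLin ((g : GLn n) : Matrix (Fin n) (Fin n) ℂ)
  map_one' := by
    simp only [OneMemClass.coe_one, Units.val_one, Matrix.mulVecLin_one]
    rfl
  map_mul' g h := by
    simp only [Subgroup.coe_mul, Units.val_mul, Matrix.mulVecLin_mul]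
    rw [Module.End.mul_eq_comp]

/-! ## The operators `Z_{t,r}` and `Z_{t+1/2,r}` -/

/-- `S ∪ S′` as a finite subset of `Fin t ⊕ Fin t`. -/
def SSfin {t : ℕ} (S : Finset (Fin t)) : Finset (Fin t ⊕ Fin t) :=
  Finset.univ.filter fun x => Sum.elim (· ∈ S) (· ∈ S) x

/-- The set partition `b_S` with blocks `S ∪ S′` and `{l,l′}` for `l ∉ S`. -/
def bS {t : ℕ} (S : Finset (Fin t)) : SP t :=
  Setoid.ker fun x : Fin t ⊕ Fin t =>
    if x ∈ SSfin S then (none : Option (Fin t ⊕ Fin t)) else some x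

/-- The set partition `d_I` with blocks `I`, `(S ∪ S′) \ I` and `{l,l′}` for `l ∉ S`. -/
def dI {t : ℕ} (S : Finset (Fin t)) (I : Finset (Fin t ⊕ Fin t)) : SP t :=
  Setoid.ker fun x : Fin t ⊕ Fin t =>
    if x ∈ I then (Sum.inl true : Bool ⊕ (Fin t ⊕ Fin t))
    else if x ∈ SSfin S then Sum.inl false else Sum.inr x

/-- `N(I)` : the number of top-row (unprimed) elements of `I`. -/
def NIc {t : ℕ} (I : Finset (Fin t ⊕ Fin t)) : ℕ :=
  (I.filter fun x => x.isLeft = true).card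

/-- `M(I)` : the number of bottom-row (primed) elements of `I`. -/
def MIc {t : ℕ} (I : Finset (Fin t ⊕ Fin t)) : ℕ :=
  (I.filter fun x => x.isRight = true).card

/-- The operator `Z_{t,r}` on `V^{⊗t}`.  The inner sum over unordered partitions
`{I, (S∪S′)∖I}` (each counted once) is written as `1/2` times the sum over ordered
proper nonempty subsets `I` of `S ∪ S′`; these agree since `d_I = d_{(S∪S′)∖I}` and
the signs coincide. -/
def Zop (r n t : ℕ) : TP n t →ₗ[ℂ] TP n t :=
  (n.choose 2 : ℂ) • LinearMap.id +
  ∑ S ∈ (Finset.univ : Finset (Fin t)).powerset.filter (fun S => S ≠ ∅),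
    ((-1 : ℂ) ^ S.card) •
      (((n : ℂ) - 1) • phiD n t (bS S) +
        (1 / 2 : ℂ) •
          ∑ I ∈ (SSfin S).powerset.filter (fun I =>
              I ≠ ∅ ∧ I ≠ SSfin S ∧ ((NIc I : ℤ) ≡ (MIc I : ℤ) [ZMOD (r : ℤ)])),
            ((-1 : ℂ) ^ ((NIc I : ℤ) - (MIc I : ℤ))) • (phiD n t (dI S I) - phiD n t (bS S)))

/-- The operator `Z_{k+1/2,r}` on `V^{⊗(k+1)}`; as in `Zop`, but for `S` containing
`k+1` the inner sum is restricted to partitions in which `k+1` and `(k+1)′` lie in the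
same part. -/
def ZopHalf (r n k : ℕ) : TP n (k + 1) →ₗ[ℂ] TP n (k + 1) :=
  (n.choose 2 : ℂ) • LinearMap.id +
  ∑ S ∈ (Finset.univ : Finset (Fin (k + 1))).powerset.filter (fun S => S ≠ ∅),
    ((-1 : ℂ) ^ S.card) •
      (((n : ℂ) - 1) • phiD n (k + 1) (bS S) +
        (1 / 2 : ℂ) •
          ∑ I ∈ (SSfin S).powerset.filter (fun I =>
              I ≠ ∅ ∧ I ≠ SSfin S ∧ ((NIc I : ℤ) ≡ (MIc I : ℤ) [ZMOD (r : ℤ)]) ∧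
              (Fin.last k ∈ S →
                ((Sum.inl (Fin.last k) : Fin (k+1) ⊕ Fin (k+1)) ∈ I ↔
                  (Sum.inr (Fin.last k) : Fin (k+1) ⊕ Fin (k+1)) ∈ I))),
            ((-1 : ℂ) ^ ((NIc I : ℤ) - (MIc I : ℤ))) •
              (phiD n (k + 1) (dI S I) - phiD n (k + 1) (bS S)))

/-- The diagonal action of `κ_{r,n}` on `V^{⊗k}`. -/
def kappaOpFull (r n k : ℕ) : TP n k →ₗ[ℂ] TP n k :=
  (1 / (r : ℂ)) • ∑ l ∈ Finset.range r, ∑ i : Fin n, ∑ j : Fin n,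
    if i < j then tensorPow n k (zijMat n r l i j) else 0

/-- The diagonal action of `κ_{r,n-1}` on `V^{⊗(k+1)}`. -/
def kappaOpL (r n k : ℕ) : TP n (k + 1) →ₗ[ℂ] TP n (k + 1) :=
  (1 / (r : ℂ)) • ∑ l ∈ Finset.range r, ∑ i : Fin n, ∑ j : Fin n,
    if i < j ∧ (j : ℕ) < n - 1 then tensorPow n (k + 1) (zijMat n r l i j) else 0

/-- `w ⊗ v_n ∈ V^{⊗(k+1)}` for `w ∈ V^{⊗k}`. -/
def extendLast (n k : ℕ) (hn : 0 < n) (w : TP n k) : TP n (k + 1) :=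
  fun j => if j (Fin.last k) = lastIdx n hn then w (fun t => j t.castSucc) else 0

/-- `A ⊗ Id_{V^{⊗(l-j)}}` : the extension of an operator on `V^{⊗j}` to `V^{⊗l}`,
acting on the first `j` tensor factors. -/
def extendOp (n j l : ℕ) (hjl : j ≤ l) (A : TP n j →ₗ[ℂ] TP n j) :
    TP n l →ₗ[ℂ] TP n l where
  toFun f := fun u =>
    A (fun x : Fin j → Fin n =>
        f (fun t : Fin l => if h : (t : ℕ) < j then x ⟨t, h⟩ else u t))
      (fun s : Fin j => u (Fin.castLE hjl s))
  map_add' f g := by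
    funext u
    show A (fun x : Fin j → Fin n =>
        (f + g) (fun t : Fin l => if h : (t : ℕ) < j then x ⟨t, h⟩ else u t))
      (fun s : Fin j => u (Fin.castLE hjl s)) =
      A (fun x : Fin j → Fin n =>
        f (fun t : Fin l => if h : (t : ℕ) < j then x ⟨t, h⟩ else u t))
      (fun s : Fin j => u (Fin.castLE hjl s)) +
      A (fun x : Fin j → Fin n =>
        g (fun t : Fin l => if h : (t : ℕ) < j then x ⟨t, h⟩ else u t))
      (fun s : Fin j => u (Fin.castLE hjl s))
    have h : (fun x : Fin j → Fin n =>
        (f + g) (fun t : Fin l => if h : (t : ℕ) < j then x ⟨t, h⟩ else u t)) =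
      (fun x : Fin j → Fin n =>
        f (fun t : Fin l => if h : (t : ℕ) < j then x ⟨t, h⟩ else u t)) +
      (fun x : Fin j → Fin n =>
        g (fun t : Fin l => if h : (t : ℕ) < j then x ⟨t, h⟩ else u t)) := rfl
    rw [h, map_add]
    rfl
  map_smul' c f := by
    funext u
    show A (fun x : Fin j → Fin n =>
        (c • f) (fun t : Fin l => if h : (t : ℕ) < j then x ⟨t, h⟩ else u t))
      (fun s : Fin j => u (Fin.castLE hjl s)) =
      c • (A (fun x : Fin j → Fin n =>
        f (fun t : Fin l => if h : (t : ℕ) < j then x ⟨t, h⟩ else u t))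
      (fun s : Fin j => u (Fin.castLE hjl s)))
    have h : (fun x : Fin j → Fin n =>
        (c • f) (fun t : Fin l => if h : (t : ℕ) < j then x ⟨t, h⟩ else u t)) =
      c • (fun x : Fin j → Fin n =>
        f (fun t : Fin l => if h : (t : ℕ) < j then x ⟨t, h⟩ else u t)) := rfl
    rw [h, _root_.map_smul]
    rfl

/-! ## Diagram multiplication (statement of the structure constants) -/

/-- The bottom row of `d₁` matches the top row of `d₂`. -/
def rowMatch (k : ℕ) (d1 d2 : SP k) : Prop :=
  ∀ i j : Fin k, d1.r (Sum.inr i) (Sum.inr j) ↔ d2.r (Sum.inl i) (Sum.inl j)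

/-- Extend a setoid on `α` along an injection `e : α → β` by singleton classes on
the complement of the range. -/
def extendSetoid {α β : Type*} (e : α → β) (he : Function.Injective e)
    (d : Setoid α) : Setoid β where
  r x y := x = y ∨ ∃ a b, d.r a b ∧ x = e a ∧ y = e b
  iseqv := by
    constructor
    · intro x; exact Or.inl rfl
    · rintro x y (rfl | ⟨a, b, hab, rfl, rfl⟩)
      · exact Or.inl rfl
      · exact Or.inr ⟨b, a, d.iseqv.symm hab, rfl, rfl⟩
    · rintro x y z (rfl | ⟨a, b, hab, rfl, rfl⟩) h2
      · exact h2
      · rcases h2 with rfl | ⟨a', b', hab', hy, rfl⟩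
        · exact Or.inr ⟨a, b, hab, rfl, rfl⟩
        · have hba : b = a' := he hy
          exact Or.inr ⟨a, b', d.iseqv.trans hab (hba ▸ hab'), rfl, rfl⟩

/-- The three-row vertex set: top row, middle row, bottom row. -/
abbrev T3 (k : ℕ) : Type := Fin k ⊕ (Fin k ⊕ Fin k)

/-- `d₁` placed on the top and middle rows. -/
def embT (k : ℕ) : Fin k ⊕ Fin k → T3 k := Sum.map id Sum.inl

/-- `d₂` placed on the middle and bottom rows. -/
def embB (k : ℕ) : Fin k ⊕ Fin k → T3 k := Sum.inr

/-- The outer (top and bottom) rows. -/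
def embO (k : ℕ) : Fin k ⊕ Fin k → T3 k := Sum.map id Sum.inr

lemma embT_inj (k : ℕ) : Function.Injective (embT k) :=
  Function.Injective.sumMap Function.injective_id Sum.inl_injective

/-- The stacked three-row diagram : the join of `d₁` (on top∪middle) and `d₂`
(on middle∪bottom); its classes are the connected components. -/
def stacked (k : ℕ) (d1 d2 : SP k) : Setoid (T3 k) :=
  extendSetoid (embT k) (embT_inj k) d1 ⊔ extendSetoid (embB k) Sum.inr_injective d2

/-- The concatenation `d₁ ∘ d₂`, i.e. the restriction of the stacked diagram to the
outer rows. -/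
def compSetoid (k : ℕ) (d1 d2 : SP k) : SP k :=
  Setoid.comap (embO k) (stacked k d1 d2)

/-- `[d₁ ∘ d₂]` : the number of connected components of the stacked diagram contained
entirely in the middle row. -/
def midCount (k : ℕ) (d1 d2 : SP k) : ℕ :=
  Nat.card {q : Quotient (stacked k d1 d2) //
    ∀ x : T3 k, Quotient.mk (stacked k d1 d2) x = q → ∃ i : Fin k, x = Sum.inr (Sum.inl i)}

/-- A block entirely contained in the top row. -/
def topOnly {k : ℕ} (d : SP k) (q : Quotient d) : Prop :=
  ∀ x, Quotient.mk d x = q → ∃ i : Fin k, x = Sum.inl i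

/-- A block entirely contained in the bottom row. -/
def botOnly {k : ℕ} (d : SP k) (q : Quotient d) : Prop :=
  ∀ x, Quotient.mk d x = q → ∃ i : Fin k, x = Sum.inr i

/-- `x` lies in the block merged from the pair `pr = (q₁, q₂)`. -/
def memPair {k : ℕ} (d1 d2 : SP k) : Fin k ⊕ Fin k → Quotient d1 × Quotient d2 → Prop
  | Sum.inl i, pr => Quotient.mk d1 (Sum.inl i) = pr.1
  | Sum.inr i, pr => Quotient.mk d2 (Sum.inr i) = pr.2

/-- `d` is obtained from `d₁ ∘ d₂` by choosing an injective partial matching between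
the top-only blocks of `d₁` and the bottom-only blocks of `d₂` and merging each
matched pair into a single block. -/
def IsCoarsening (k : ℕ) (d1 d2 d : SP k) : Prop :=
  ∃ P : Finset (Quotient d1 × Quotient d2),
    (∀ pr ∈ P, topOnly d1 pr.1 ∧ botOnly d2 pr.2) ∧
    (∀ pr ∈ P, ∀ pr' ∈ P, pr.1 = pr'.1 → pr = pr') ∧
    (∀ pr ∈ P, ∀ pr' ∈ P, pr.2 = pr'.2 → pr = pr') ∧
    (∀ x y : Fin k ⊕ Fin k, d.r x y ↔
      ((compSetoid k d1 d2).r x y ∨ ∃ pr ∈ P, memPair d1 d2 x pr ∧ memPair d1 d2 y pr))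

/-- The (integer) falling factorial `(a)_b = a(a-1)⋯(a-b+1)`. -/
def fallingC (a : ℤ) (b : ℕ) : ℤ := ∏ i ∈ Finset.range b, (a - i)

/-! ## The elements `c₁, c₂` of `G(2,2,2k)` and the operator `M_{k,2,2}` -/

/-- The underlying function of the permutation `(1 2)(3 4)⋯(2k-1 2k)` of `Fin (2k)`:
it swaps `2t` and `2t+1` (0-indexed) for each `t < k`. -/
def pairFn (k : ℕ) : Fin (2 * k) → Fin (2 * k) := fun x =>
  if _ : (x : ℕ) % 2 = 0 then ⟨(x : ℕ) + 1, by have := x.2; omega⟩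
  else ⟨(x : ℕ) - 1, by have := x.2; omega⟩

lemma pairFn_invol (k : ℕ) : Function.Involutive (pairFn k) := by
  intro x
  unfold pairFn
  split_ifs with h1 h2 h3
  · refine Fin.ext ?_; simp only [Fin.val_mk] at h2 ⊢; omega
  · refine Fin.ext ?_; simp only [Fin.val_mk] at h2 ⊢; omega
  · refine Fin.ext ?_; simp only [Fin.val_mk] at h3 ⊢; omega
  · refine Fin.ext ?_; simp only [Fin.val_mk] at h3 ⊢; omega

/-- The permutation `(1 2)(3 4)⋯(2k-1 2k)` of `Fin (2k)`. -/
def pairPerm (k : ℕ) : Equiv.Perm (Fin (2 * k)) :=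
  Function.Involutive.toPerm (pairFn k) (pairFn_invol k)

/-- `c₂` : the permutation matrix of `(1 2)(3 4)⋯(2k-1 2k)`. -/
def c2Mat (k : ℕ) : Matrix (Fin (2 * k)) (Fin (2 * k)) ℂ :=
  monoMat (2 * k) (pairPerm k) (fun _ => 1)

/-- The diagonal matrix `diag(-1,-1,1,…,1)`. -/
def dMat (k : ℕ) : Matrix (Fin (2 * k)) (Fin (2 * k)) ℂ :=
  Matrix.diagonal fun t => if (t : ℕ) < 2 then (-1 : ℂ) else 1

/-- `c₁ = D · c₂`. -/
def c1Mat (k : ℕ) : Matrix (Fin (2 * k)) (Fin (2 * k)) ℂ := dMat k * c2Mat k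

/-- Two matrices are conjugate by an element of `G(r,p,n)`. -/
def conjIn (r p n : ℕ) (c x : Matrix (Fin n) (Fin n) ℂ) : Prop :=
  ∃ g ∈ GSet r p n, g * c = x * g

/-- The conjugacy class of `c` in `G(r,p,n)`. -/
def conjClass (r p n : ℕ) (c : Matrix (Fin n) (Fin n) ℂ) :
    Set (Matrix (Fin n) (Fin n) ℂ) :=
  {h | h ∈ GSet r p n ∧ conjIn r p n c h}

/-- The set partition of `{1,…,k,1′,…,k′}` all of whose blocks are singletons. -/
def singletonSP (k : ℕ) : SP k := ⟨Eq, eq_equivalence⟩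

/-- The operator `M_{k,2,2} = φ_k(x_{d₀})` on `(ℂ^{2k})^{⊗k}`, where `d₀` is the set
partition with all blocks singletons. -/
def Mop (k : ℕ) : TP (2 * k) k →ₗ[ℂ] TP (2 * k) k :=
  phiX (2 * k) k (singletonSP k)

/-! The matrix coefficient of `φ(x_{d₁}) ∘ φ(x_{d₂})` at a tuple `x` counts labellings of
a middle row; it is unchanged when the values of `x` are permuted, so it depends only on the
set partition `ker x`, and the composite is a combination of the `φ(x_{ker x})` with nonzero
coefficient. For such `x`, `ker x` is glued from realizations of `d₁` and `d₂` on three rows.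
For a partition realized by a tuple with values in `[n]` (so with at most `n` blocks, which
rules out `Θ`), lying in `Π ∪ Λ` means that the defects `N - M` of all values are congruent
mod `r` to one multiple of `m`. Defects add under gluing, so this passes to `ker x`, and so
does `k + 1 ~ (k + 1)′`. -/

theorem _root_.exists_perm_apply_eq_of_ker_eq {α β : Type*} [Finite β] {x y : α → β}
    (h : Setoid.ker x = Setoid.ker y) : ∃ σ : Equiv.Perm β, ∀ a, σ (x a) = y a := by
  classical
  have := Fintype.ofFinite β
  let e : Set.range x ≃ Set.range y :=
    (Setoid.quotientKerEquivRange x).symm.trans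
      ((Quotient.congrRight fun a b => by rw [h]).trans (Setoid.quotientKerEquivRange y))
  refine ⟨Equiv.extendSubtype e, fun a => ?_⟩
  rw [Equiv.extendSubtype_apply_of_mem _ _ ⟨a, rfl⟩]
  have : (Setoid.quotientKerEquivRange x).symm ⟨x a, a, rfl⟩ = Quotient.mk _ a := by
    rw [Equiv.symm_apply_eq]; rfl
  simp only [e, Equiv.trans_apply, this]
  rfl

theorem _root_.Submodule.mul_mem_span_of_forall_mul_mem {R A : Type*} [CommSemiring R]
    [Semiring A] [Algebra R A] {S : Set A} (hS : ∀ a ∈ S, ∀ b ∈ S, a * b ∈ Submodule.span R S)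
    {a b : A} (ha : a ∈ Submodule.span R S) (hb : b ∈ Submodule.span R S) :
    a * b ∈ Submodule.span R S := by
  have hle : Submodule.span R S * Submodule.span R S ≤ Submodule.span R S := by
    rw [Submodule.span_mul_span, Submodule.span_le]
    rintro _ ⟨a, ha, b, hb, rfl⟩
    exact hS a ha b hb
  exact hle (Submodule.mul_mem_mul ha hb)

section Kernels

open Finset

variable {n t : ℕ}

theorem kernelMap_eq_toLin' (K : (Fin t → Fin n) → (Fin t → Fin n) → ℂ) :
    kernelMap n t K = Matrix.toLin' (Matrix.of K) := rfl

theorem coeX_eq_ite (d : SP t) (c : Fin t ⊕ Fin t → Fin n) :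
    coeX n t d c = if d = Setoid.ker c then 1 else 0 := by
  simp only [coeX, Setoid.ext_iff, Setoid.ker_def]

theorem coeX_perm_comp (d : SP t) (σ : Equiv.Perm (Fin n)) (w : Fin t ⊕ Fin t → Fin n) :
    coeX n t d (σ ∘ w) = coeX n t d w := by
  simp only [coeX, Function.comp_apply, EmbeddingLike.apply_eq_iff_eq]

def kerFiberCard (n : ℕ) (d : SP t) : ℕ :=
  #{x : Fin t ⊕ Fin t → Fin n | Setoid.ker x = d}

theorem sum_div_kerFiberCard_mul_coeX {K : (Fin t ⊕ Fin t → Fin n) → ℂ}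
    (hK : ∀ x y, Setoid.ker x = Setoid.ker y → K x = K y) (y : Fin t ⊕ Fin t → Fin n) :
    ∑ x, K x / kerFiberCard n (Setoid.ker x) * coeX n t (Setoid.ker x) y = K y := by
  have hpos : (kerFiberCard n (Setoid.ker y) : ℂ) ≠ 0 :=
    Nat.cast_ne_zero.mpr (card_ne_zero.mpr ⟨y, mem_filter.mpr ⟨mem_univ _, rfl⟩⟩)
  simp_rw [coeX_eq_ite, mul_ite, mul_one, mul_zero]
  rw [← sum_filter]
  calc ∑ x ∈ {x | Setoid.ker x = Setoid.ker y}, K x / kerFiberCard n (Setoid.ker x)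
      = ∑ x ∈ {x | Setoid.ker x = Setoid.ker y},
          K y / kerFiberCard n (Setoid.ker y) :=
        sum_congr rfl fun x hx => by rw [(mem_filter.mp hx).2, hK x y (mem_filter.mp hx).2]
    _ = K y := by
      rw [sum_const, nsmul_eq_mul]
      exact mul_div_cancel₀ _ hpos

theorem kernelMap_mem_span_phiX {K : (Fin t ⊕ Fin t → Fin n) → ℂ}
    (hK : ∀ x y, Setoid.ker x = Setoid.ker y → K x = K y) {P : SP t → Prop}
    (hP : ∀ x, K x ≠ 0 → P (Setoid.ker x)) :
    kernelMap n t (fun o i => K (Sum.elim i o)) ∈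
      Submodule.span ℂ {T | ∃ d, P d ∧ T = phiX n t d} := by
  have hsum : kernelMap n t (fun o i => K (Sum.elim i o)) =
      ∑ x, (K x / kerFiberCard n (Setoid.ker x)) • phiX n t (Setoid.ker x) := by
    simp only [phiX, kernelMap_eq_toLin', ← map_smul, ← map_sum]
    congr 1
    ext o i
    simp only [Matrix.of_apply, Matrix.sum_apply, Matrix.smul_apply, smul_eq_mul]
    exact (sum_div_kerFiberCard_mul_coeX hK _).symm
  rw [hsum]
  refine Submodule.sum_mem _ fun x _ => ?_
  by_cases hx : K x = 0
  · simp [hx]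
  · exact Submodule.smul_mem _ _ (Submodule.subset_span ⟨_, hP x hx, rfl⟩)

def compCoeff (n : ℕ) (d₁ d₂ : SP t) (x : Fin t ⊕ Fin t → Fin n) : ℂ :=
  ∑ mm : Fin t → Fin n,
    coeX n t d₁ (Sum.elim mm (x ∘ Sum.inr)) * coeX n t d₂ (Sum.elim (x ∘ Sum.inl) mm)

theorem phiX_comp_phiX (d₁ d₂ : SP t) :
    phiX n t d₁ ∘ₗ phiX n t d₂ = kernelMap n t fun o i => compCoeff n d₁ d₂ (Sum.elim i o) := by
  simp only [phiX, kernelMap_eq_toLin', ← Matrix.toLin'_mul]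
  rfl

theorem compCoeff_perm_comp (d₁ d₂ : SP t) (σ : Equiv.Perm (Fin n))
    (x : Fin t ⊕ Fin t → Fin n) : compCoeff n d₁ d₂ (σ ∘ x) = compCoeff n d₁ d₂ x := by
  refine (Fintype.sum_equiv (Equiv.arrowCongr (Equiv.refl _) σ) _ _ fun mm => ?_).symm
  rw [← coeX_perm_comp d₁ σ, ← coeX_perm_comp d₂ σ, Sum.comp_elim, Sum.comp_elim]
  rfl

theorem compCoeff_eq_of_ker_eq (d₁ d₂ : SP t) {x y : Fin t ⊕ Fin t → Fin n}
    (h : Setoid.ker x = Setoid.ker y) : compCoeff n d₁ d₂ x = compCoeff n d₁ d₂ y := by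
  obtain ⟨σ, hσ⟩ := exists_perm_apply_eq_of_ker_eq h
  rw [← compCoeff_perm_comp d₁ d₂ σ x]
  exact congrArg _ (funext hσ)

theorem exists_ker_eq_of_compCoeff_ne_zero {d₁ d₂ : SP t} {x : Fin t ⊕ Fin t → Fin n}
    (h : compCoeff n d₁ d₂ x ≠ 0) :
    ∃ mm : Fin t → Fin n, d₁ = Setoid.ker (Sum.elim mm (x ∘ Sum.inr)) ∧
      d₂ = Setoid.ker (Sum.elim (x ∘ Sum.inl) mm) := by
  obtain ⟨mm, -, hmm⟩ := exists_ne_zero_of_sum_ne_zero h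
  refine ⟨mm, ?_, ?_⟩
  · by_contra hne
    simp [coeX_eq_ite, hne] at hmm
  · by_contra hne
    simp [coeX_eq_ite, hne] at hmm

theorem phiX_comp_phiX_mem_span {d₁ d₂ : SP t} {P : SP t → Prop}
    (hP : ∀ (x : Fin t ⊕ Fin t → Fin n) (mm : Fin t → Fin n),
      d₁ = Setoid.ker (Sum.elim mm (x ∘ Sum.inr)) →
      d₂ = Setoid.ker (Sum.elim (x ∘ Sum.inl) mm) → P (Setoid.ker x)) :
    phiX n t d₁ ∘ₗ phiX n t d₂ ∈ Submodule.span ℂ {T | ∃ d, P d ∧ T = phiX n t d} := by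
  rw [phiX_comp_phiX]
  refine kernelMap_mem_span_phiX (fun x y => compCoeff_eq_of_ker_eq d₁ d₂) fun x hx => ?_
  obtain ⟨mm, h₁, h₂⟩ := exists_ker_eq_of_compCoeff_ne_zero hx
  exact hP x mm h₁ h₂

end Kernels

section Defect

open Finset

variable {n t : ℕ}

def valDefect (w : Fin t ⊕ Fin t → Fin n) (v : Fin n) : ℤ :=
  (#{a | w (Sum.inl a) = v} : ℤ) - #{a | w (Sum.inr a) = v}

theorem topCt_ker (w : Fin t ⊕ Fin t → Fin n) (a : Fin t ⊕ Fin t) :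
    topCt (Setoid.ker w) (Quotient.mk _ a) = #{b | w (Sum.inl b) = w a} := by
  rw [topCt, ← Fintype.card_subtype, ← Nat.card_eq_fintype_card]
  exact Nat.card_congr (Equiv.subtypeEquivRight fun b => Quotient.eq)

theorem botCt_ker (w : Fin t ⊕ Fin t → Fin n) (a : Fin t ⊕ Fin t) :
    botCt (Setoid.ker w) (Quotient.mk _ a) = #{b | w (Sum.inr b) = w a} := by
  rw [botCt, ← Fintype.card_subtype, ← Nat.card_eq_fintype_card]
  exact Nat.card_congr (Equiv.subtypeEquivRight fun b => Quotient.eq)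

theorem topCt_sub_botCt_ker (w : Fin t ⊕ Fin t → Fin n) (a : Fin t ⊕ Fin t) :
    (topCt (Setoid.ker w) (Quotient.mk _ a) : ℤ) - botCt (Setoid.ker w) (Quotient.mk _ a) =
      valDefect w (w a) := by
  rw [topCt_ker, botCt_ker, valDefect]

theorem topCt_modEq_botCt_ker_iff (w : Fin t ⊕ Fin t → Fin n) (a : Fin t ⊕ Fin t) (m : ℤ) :
    (topCt (Setoid.ker w) (Quotient.mk _ a) : ℤ) ≡ botCt (Setoid.ker w) (Quotient.mk _ a)
      [ZMOD m] ↔ valDefect w (w a) ≡ 0 [ZMOD m] := by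
  rw [← topCt_sub_botCt_ker, Int.modEq_zero_iff_dvd, Int.modEq_iff_dvd, dvd_sub_comm]

theorem valDefect_eq_zero_of_notMem_range {w : Fin t ⊕ Fin t → Fin n} {v : Fin n}
    (hv : v ∉ Set.range w) : valDefect w v = 0 := by
  have hempty : ∀ f : Fin t → Fin t ⊕ Fin t, #{a | w (f a) = v} = 0 := fun f =>
    card_eq_zero.mpr (filter_eq_empty_iff.mpr fun a _ h => hv ⟨f a, h⟩)
  rw [valDefect, hempty Sum.inl, hempty Sum.inr, sub_self]

theorem valDefect_add_valDefect (x : Fin t ⊕ Fin t → Fin n) (mm : Fin t → Fin n) (v : Fin n) :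
    valDefect (Sum.elim (x ∘ Sum.inl) mm) v + valDefect (Sum.elim mm (x ∘ Sum.inr)) v =
      valDefect x v := by
  simp only [valDefect, Sum.elim_inl, Sum.elim_inr, Function.comp_apply]
  exact sub_add_sub_cancel _ _ _

theorem nBlocks_ker (w : Fin t ⊕ Fin t → Fin n) : nBlocks (Setoid.ker w) = (Set.range w).ncard :=
  Nat.card_congr (Setoid.quotientKerEquivRange w)

theorem nBlocks_ker_le (w : Fin t ⊕ Fin t → Fin n) : nBlocks (Setoid.ker w) ≤ n := by
  simpa [nBlocks_ker] using Set.ncard_le_card (Set.range w)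

theorem nBlocks_ker_eq_iff (w : Fin t ⊕ Fin t → Fin n) :
    nBlocks (Setoid.ker w) = n ↔ Function.Surjective w := by
  rw [nBlocks_ker, ← Set.range_eq_univ, Set.eq_univ_iff_ncard, Nat.card_fin]

variable {r p : ℕ}

theorem exists_valDefect_modEq_of_inA {w : Fin t ⊕ Fin t → Fin n}
    (hA : inA r p n (Setoid.ker w)) :
    ∃ c : ℤ, ((r / p : ℕ) : ℤ) ∣ c ∧ ∀ v, valDefect w v ≡ c [ZMOD r] := by
  rcases hA with hPi | ⟨hcard, hblock, hconst⟩ | ⟨hcard, -⟩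
  · refine ⟨0, dvd_zero _, fun v => ?_⟩
    by_cases hv : v ∈ Set.range w
    · obtain ⟨a, rfl⟩ := hv
      exact (topCt_modEq_botCt_ker_iff w a r).mp (hPi _)
    · rw [valDefect_eq_zero_of_notMem_range hv]
  · have hsurj := (nBlocks_ker_eq_iff w).mp hcard
    rcases isEmpty_or_nonempty (Fin n) with hn | hn
    · exact ⟨0, dvd_zero _, fun v => isEmptyElim v⟩
    obtain ⟨v₀⟩ := hn
    obtain ⟨a₀, rfl⟩ := hsurj v₀
    refine ⟨valDefect w (w a₀), ?_, fun v => ?_⟩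
    · exact Int.modEq_zero_iff_dvd.mp ((topCt_modEq_botCt_ker_iff w a₀ _).mp (hblock _).1)
    · obtain ⟨a, rfl⟩ := hsurj v
      simpa only [topCt_sub_botCt_ker] using hconst (Quotient.mk _ a) (Quotient.mk _ a₀)
  · exact absurd hcard (nBlocks_ker_le w).not_gt

theorem inPi_or_inLambda_of_valDefect_modEq (hpr : p ∣ r) {w : Fin t ⊕ Fin t → Fin n} {c : ℤ}
    (hc : ((r / p : ℕ) : ℤ) ∣ c) (hδ : ∀ v, valDefect w v ≡ c [ZMOD r]) :
    inPi r (Setoid.ker w) ∨ inLambda r p n (Setoid.ker w) := by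
  by_cases hrc : c ≡ 0 [ZMOD r]
  · refine Or.inl fun q => Quotient.inductionOn q fun a => ?_
    exact (topCt_modEq_botCt_ker_iff w a r).mpr ((hδ _).trans hrc)
  have hsurj : Function.Surjective w := fun v => by
    by_contra hv
    exact hrc (by simpa [valDefect_eq_zero_of_notMem_range hv] using (hδ v).symm)
  have hmr : ((r / p : ℕ) : ℤ) ∣ r := Int.natCast_dvd_natCast.mpr (Nat.div_dvd_of_dvd hpr)
  refine Or.inr ⟨(nBlocks_ker_eq_iff w).mpr hsurj, fun q => Quotient.inductionOn q fun a => ?_,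
    fun q q' => Quotient.inductionOn₂ q q' fun a a' => ?_⟩
  · rw [topCt_modEq_botCt_ker_iff, topCt_modEq_botCt_ker_iff]
    exact ⟨((hδ _).of_dvd hmr).trans (Int.modEq_zero_iff_dvd.mpr hc),
      fun h => hrc ((hδ _).symm.trans h)⟩
  · rw [topCt_sub_botCt_ker, topCt_sub_botCt_ker]
    exact (hδ _).trans (hδ _).symm

theorem inA_ker_of_inA_ker (hpr : p ∣ r) {x : Fin t ⊕ Fin t → Fin n} {mm : Fin t → Fin n}
    (h₁ : inA r p n (Setoid.ker (Sum.elim mm (x ∘ Sum.inr))))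
    (h₂ : inA r p n (Setoid.ker (Sum.elim (x ∘ Sum.inl) mm))) :
    inA r p n (Setoid.ker x) := by
  obtain ⟨c₁, hc₁, hδ₁⟩ := exists_valDefect_modEq_of_inA h₁
  obtain ⟨c₂, hc₂, hδ₂⟩ := exists_valDefect_modEq_of_inA h₂
  refine Or.imp_right Or.inl (inPi_or_inLambda_of_valDefect_modEq hpr (dvd_add hc₂ hc₁) fun v => ?_)
  rw [← valDefect_add_valDefect x mm v]
  exact (hδ₂ v).add (hδ₁ v)

theorem isHalf_ker_of_isHalf_ker {k : ℕ} {x : Fin (k + 1) ⊕ Fin (k + 1) → Fin n}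
    {mm : Fin (k + 1) → Fin n} (h₁ : isHalf k (Setoid.ker (Sum.elim mm (x ∘ Sum.inr))))
    (h₂ : isHalf k (Setoid.ker (Sum.elim (x ∘ Sum.inl) mm))) : isHalf k (Setoid.ker x) :=
  Eq.trans h₂ h₁

end Defect

theorem statement5_general (r p n k : ℕ) (hpr : p ∣ r) :
    ∀ F ∈ Submodule.span ℂ (TanSetHalf r p n k),
      ∀ G ∈ Submodule.span ℂ (TanSetHalf r p n k),
        F ∘ₗ G ∈ Submodule.span ℂ (TanSetHalf r p n k) := by
  intro F hF G hG
  refine Submodule.mul_mem_span_of_forall_mul_mem ?_ hF hG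
  rintro _ ⟨d₁, ⟨hA₁, hh₁⟩, rfl⟩ _ ⟨d₂, ⟨hA₂, hh₂⟩, rfl⟩
  refine phiX_comp_phiX_mem_span fun x mm e₁ e₂ => ?_
  subst e₁ e₂
  exact ⟨inA_ker_of_inA_ker hpr hA₁ hA₂, isHalf_ker_of_isHalf_ker hh₁ hh₂⟩

/-- The span of `{φ_{k+1}(x_d) : d ∈ A_{k+1/2}(r,p,n)}` in
`End(V^{⊗(k+1)})` is closed under composition. -/
theorem statement5 (r p n k : ℕ) (hr : 0 < r) (hp : 0 < p) (hn : 0 < n) (hpr : p ∣ r) :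
    ∀ F ∈ Submodule.span ℂ (TanSetHalf r p n k),
      ∀ G ∈ Submodule.span ℂ (TanSetHalf r p n k),
        F ∘ₗ G ∈ Submodule.span ℂ (TanSetHalf r p n k) :=
  statement5_general r p n k hpr

end Tanabe
end
end

section
/- Let k be a positive integer and set n = 2k. Then M_{k,2,2} commutes with the diagonal action of G(2,2,2k) on V^{⊗k} (i.e., M_{k,2,2} ∘ g^{⊗k} = g^{⊗k} ∘ M_{k,2,2} for all g ∈ G(2,2,2k)) and M_{k,2,2} commutes with every endomorphism of V^{⊗k} that commutes with this diagonal action; in other words, M_{k,2,2} is a central element of the centralizer algebra End_{G(2,2,2k)}(V^{⊗k}). -/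
open scoped Classical
open Matrix

noncomputable section

namespace Tanabe

/-!
In coordinates `M_{k,2,2}` has kernel `M o i = 1` exactly when `(i, o)` enumerates `Fin (2k)`
without repetition. An element of `G(2,2,2k)` is a permutation times a sign change with an
even number of `-1`s: permutations preserve this kernel, and for an enumeration `(i, o)` the signs
read along `i` and along `o` have product `1`, hence are equal.

Conversely, the kernel `K` of an operator commuting with `G(2,2,2k)` is invariant under
permutations, and testing against the sign change at two coordinates shows that `K o j ≠ 0`
forces the values of odd multiplicity in `o` and in `j` to form equal or complementary sets.
If one of `o`, `j` is injective, this set has `k` elements, so both are injective with equal or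
complementary images. Consequently `(M K) o j` and `(K M) o j` vanish unless `o` and `j` lie in
such a block, and within a block the two sums are matched term by term by permutations.
-/

open Finset Function

section KernelCalculus

variable {n k : ℕ}

@[simp]
lemma kernelMap_apply (K : (Fin k → Fin n) → (Fin k → Fin n) → ℂ) (f : TP n k)
    (o : Fin k → Fin n) : kernelMap n k K f o = ∑ i, K o i * f i :=
  rfl

lemma kernelMap_comp (K₁ K₂ : (Fin k → Fin n) → (Fin k → Fin n) → ℂ) :
    kernelMap n k K₁ ∘ₗ kernelMap n k K₂ = kernelMap n k fun o j => ∑ i, K₁ o i * K₂ i j := by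
  ext f o
  simp only [LinearMap.comp_apply, kernelMap_apply, mul_sum, sum_mul, mul_assoc]
  exact sum_comm

lemma kernelMap_injective : Injective (kernelMap n k) := by
  intro K₁ K₂ h
  funext o j
  simpa [Pi.single_apply] using congr_fun (LinearMap.congr_fun h (Pi.single j 1)) o

lemma exists_eq_kernelMap (F : TP n k →ₗ[ℂ] TP n k) : ∃ K, F = kernelMap n k K :=
  ⟨fun o i => F (Pi.single i 1) o, LinearMap.pi_ext fun i x => by
    funext o
    rw [← mul_one x, ← smul_eq_mul, Pi.single_smul', map_smul]
    simp [Pi.single_apply, mul_comm]⟩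

lemma tensorPow_monoMat (π : Equiv.Perm (Fin n)) (a : Fin n → ℂ) :
    tensorPow n k (monoMat n π a) =
      kernelMap n k fun u v => if u = π ∘ v then ∏ t, a (v t) else 0 := by
  unfold tensorPow
  congr 1
  funext u v
  simp only [monoMat, of_apply, prod_ite_zero, mem_univ, true_implies, funext_iff,
    Function.comp_apply]

lemma kernelMap_comm_tensorPow_monoMat_iff {K : (Fin k → Fin n) → (Fin k → Fin n) → ℂ}
    {π : Equiv.Perm (Fin n)} {a : Fin n → ℂ} :
    kernelMap n k K ∘ₗ tensorPow n k (monoMat n π a) =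
        tensorPow n k (monoMat n π a) ∘ₗ kernelMap n k K ↔
      ∀ o j, K (π ∘ o) (π ∘ j) * ∏ t, a (j t) = (∏ t, a (o t)) * K o j := by
  rw [tensorPow_monoMat, kernelMap_comp, kernelMap_comp, kernelMap_injective.eq_iff, funext_iff,
    π.surjective.comp_left.forall]
  refine forall_congr' fun o => ?_
  rw [funext_iff]
  refine forall_congr' fun j => ?_
  simp only [mul_ite, mul_zero, ite_mul, zero_mul, sum_ite_eq', mem_univ, if_true,
    π.injective.comp_left.eq_iff, sum_ite_eq]

end KernelCalculus

lemma forall_even_or_forall_odd {β : Type*} {f : β → ℕ} (h : ∀ x y, Even (f x + f y)) :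
    (∀ x, Even (f x)) ∨ ∀ x, Odd (f x) := by
  by_cases h₀ : ∃ x, Even (f x)
  · obtain ⟨x, hx⟩ := h₀
    exact Or.inl fun y => (Nat.even_add.1 (h x y)).1 hx
  · push Not at h₀
    exact Or.inr fun x => Nat.not_even_iff_odd.1 (h₀ x)

section Fibers

variable {α β : Type*} [Fintype α] [DecidableEq β]

def fiberCard (u : α → β) (x : β) : ℕ := (univ.filter fun t => u t = x).card

lemma fiberCard_of_injective {u : α → β} (hu : Injective u) (x : β) :
    fiberCard u x = if x ∈ univ.image u then 1 else 0 := by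
  unfold fiberCard
  split_ifs with hx
  · obtain ⟨t, -, rfl⟩ := mem_image.1 hx
    exact card_eq_one.2 ⟨t, by ext; simp [hu.eq_iff]⟩
  · simp only [card_eq_zero, filter_eq_empty_iff]
    exact fun t _ ht => hx (mem_image.2 ⟨t, mem_univ t, ht⟩)

lemma injective_and_image_eq_of_odd_fiberCard {v : α → β} {S : Finset β}
    (hcard : Fintype.card α ≤ #S) (hodd : ∀ x ∈ S, Odd (fiberCard v x)) :
    Injective v ∧ univ.image v = S := by
  have hsub : S ⊆ univ.image v := fun x hx => by
    obtain ⟨t, ht⟩ := card_pos.1 (hodd x hx).pos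
    exact mem_image.2 ⟨t, mem_univ t, (mem_filter.1 ht).2⟩
  have himage : #(univ.image v) ≤ Fintype.card α := card_image_le
  refine ⟨fun s t hst => ?_, (eq_of_subset_of_card_le hsub (by omega)).symm⟩
  have hinj : Set.InjOn v (univ : Finset α) :=
    injOn_of_card_image_eq (le_antisymm himage (hcard.trans (card_le_card hsub)))
  exact hinj (mem_univ s) (mem_univ t) hst

/-- `M_{k,2,2}` only connects enumerations of complementary subsets, so its blocks are the
classes of this relation. -/
def SameBlock [Fintype β] (u v : α → β) : Prop :=
  Injective u ∧ Injective v ∧ (univ.image v = univ.image u ∨ univ.image v = (univ.image u)ᶜ)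

lemma SameBlock.symm [Fintype β] {u v : α → β} (h : SameBlock u v) : SameBlock v u := by
  obtain ⟨hu, hv, himg | himg⟩ := h
  · exact ⟨hv, hu, Or.inl himg.symm⟩
  · exact ⟨hv, hu, Or.inr (eq_compl_comm.1 himg)⟩

lemma SameBlock.trans [Fintype β] {u v w : α → β} (h₁ : SameBlock u v) (h₂ : SameBlock v w) :
    SameBlock u w := by
  obtain ⟨hu, -, h₁⟩ := h₁
  obtain ⟨-, hw, h₂⟩ := h₂
  refine ⟨hu, hw, ?_⟩
  rcases h₁ with h₁ | h₁ <;> rcases h₂ with h₂ | h₂ <;> simp [h₁, h₂]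

lemma sameBlock_of_parity [Fintype β] {u v : α → β} (hu : Injective u)
    (hcard : Fintype.card β = 2 * Fintype.card α)
    (h : (∀ x, Even (fiberCard u x + fiberCard v x)) ∨ ∀ x, Odd (fiberCard u x + fiberCard v x)) :
    SameBlock u v := by
  have hcard_image : #(univ.image u) = Fintype.card α := card_image_of_injective _ hu
  rcases h with h | h
  · obtain ⟨hv, himg⟩ := injective_and_image_eq_of_odd_fiberCard (v := v) (S := univ.image u)
      hcard_image.ge fun x hx => by simpa [fiberCard_of_injective hu, hx, parity_simps] using h x
    exact ⟨hu, hv, Or.inl himg⟩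
  · obtain ⟨hv, himg⟩ := injective_and_image_eq_of_odd_fiberCard (v := v) (S := (univ.image u)ᶜ)
      (by rw [card_compl]; omega) fun x hx => by
        simpa [fiberCard_of_injective hu, mem_compl.1 hx] using h x
    exact ⟨hu, hv, Or.inr himg⟩

end Fibers

section Enumerations

variable {α β γ : Type*}

lemma exists_perm_comp_eq_of_bijective {u u' : α → γ} {v v' : β → γ}
    (h : Bijective (Sum.elim u v)) (h' : Bijective (Sum.elim u' v')) :
    ∃ π : Equiv.Perm γ, π ∘ u = u' ∧ π ∘ v = v' := by
  refine ⟨(Equiv.ofBijective _ h).symm.trans (Equiv.ofBijective _ h'), funext fun t => ?_,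
    funext fun t => ?_⟩
  · exact congr_arg (Equiv.ofBijective _ h') ((Equiv.ofBijective _ h).symm_apply_apply (.inl t))
  · exact congr_arg (Equiv.ofBijective _ h') ((Equiv.ofBijective _ h).symm_apply_apply (.inr t))

lemma injective_sumElim_iff_disjoint [Fintype α] [Fintype β] [DecidableEq γ] {u : α → γ}
    {v : β → γ} :
    Injective (Sum.elim u v) ↔
      Injective u ∧ Injective v ∧ Disjoint (univ.image u) (univ.image v) := by
  simp [Sum.elim_injective, disjoint_left, eq_comm]

lemma injective_sumElim_comm {u : α → γ} {v : β → γ} :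
    Injective (Sum.elim u v) ↔ Injective (Sum.elim v u) := by
  rw [← Sum.elim_swap]
  exact (Equiv.sumComm α β).injective_comp _

/-- Once `(u, v)` enumerates `γ`, the `i` making `(i, v)` jointly injective are the `u ∘ σ`. -/
lemma sum_ite_injective_sumElim_eq_sum_perm [Fintype α] [DecidableEq α] [Fintype β]
    [DecidableEq β] [Fintype γ] [DecidableEq γ]
    {M : Type*} [AddCommMonoid M] {u : α → γ} {v : β → γ} (h : Bijective (Sum.elim u v))
    (f : (α → γ) → M) :
    ∑ i : α → γ, (if Injective (Sum.elim i v) then f i else 0) = ∑ σ : Equiv.Perm α, f (u ∘ σ) := by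
  have hu : Injective u := h.1.comp Sum.inl_injective
  rw [← sum_filter]
  symm
  refine sum_bij (fun σ _ => u ∘ σ) (fun σ _ => ?_) (fun σ _ τ _ hστ => ?_) (fun i hi => ?_)
    (fun _ _ => rfl)
  · obtain ⟨-, hv, huv⟩ := Sum.elim_injective.1 h.1
    simp only [mem_filter, mem_univ, true_and, Sum.elim_injective]
    exact ⟨hu.comp σ.injective, hv, fun a b => huv (σ a) b⟩
  · exact Equiv.ext fun t => hu (congr_fun hστ t)
  · obtain ⟨hi, -, hiv⟩ := Sum.elim_injective.1 (mem_filter.1 hi).2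
    have hpre : ∀ t, ∃ s, u s = i t := fun t => by
      obtain ⟨z | z, hz⟩ := h.2 (i t)
      · exact ⟨z, hz⟩
      · exact absurd hz.symm (hiv t z)
    choose σ hσ using hpre
    have hσinj : Injective σ := fun s t hst => hi (by rw [← hσ s, ← hσ t, hst])
    exact ⟨Equiv.ofBijective σ (Finite.injective_iff_bijective.1 hσinj), mem_univ _,
      funext hσ⟩

end Enumerations

section Complements

variable {k : ℕ}

lemma bijective_of_injective_sumElim {u v : Fin k → Fin (2 * k)}
    (h : Injective (Sum.elim u v)) : Bijective (Sum.elim u v) :=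
  (Fintype.bijective_iff_injective_and_card _).2 ⟨h, by simp [two_mul]⟩

lemma image_eq_compl_of_injective_sumElim {u v : Fin k → Fin (2 * k)}
    (h : Injective (Sum.elim u v)) : univ.image v = (univ.image u)ᶜ := by
  have hne := (Sum.elim_injective.1 h).2.2
  ext x
  simp only [mem_image, mem_univ, true_and, mem_compl, not_exists]
  constructor
  · rintro ⟨t, rfl⟩ s
    exact hne s t
  · intro hx
    obtain ⟨z | z, hz⟩ := (bijective_of_injective_sumElim h).2 x
    · exact absurd hz (hx z)
    · exact ⟨z, hz⟩

lemma sameBlock_of_injective_sumElim {u v : Fin k → Fin (2 * k)}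
    (h : Injective (Sum.elim u v)) : SameBlock u v :=
  ⟨(Sum.elim_injective.1 h).1, (Sum.elim_injective.1 h).2.1,
    Or.inr (image_eq_compl_of_injective_sumElim h)⟩

end Complements

section Centralizer

variable {r p n k : ℕ} {K : (Fin k → Fin n) → (Fin k → Fin n) → ℂ}

lemma kernel_perm_comp_eq (hK : kernelMap n k K ∈ centG r p n k) (π : Equiv.Perm (Fin n))
    (o j : Fin k → Fin n) : K (π ∘ o) (π ∘ j) = K o j := by
  have hπ : monoMat n π (fun _ => 1) ∈ GSet r p n := ⟨π, _, fun _ => one_pow r, by simp, rfl⟩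
  simpa using kernelMap_comm_tensorPow_monoMat_iff.1 (hK _ hπ) o j

lemma prod_mulSingle_neg_one_comp (u : Fin k → Fin n) (x : Fin n) :
    ∏ t, (Pi.mulSingle x (-1) : Fin n → ℂ) (u t) = (-1) ^ fiberCard u x := by
  rw [fiberCard, ← prod_const, prod_filter]
  simp only [Pi.mulSingle_apply]

/-- Test `K` against the sign change of the coordinates `x` and `y`, an element of `G(r,p,n)`. -/
lemma even_fiberCard_add_of_kernel_ne_zero (hr : Even r) (hK : kernelMap n k K ∈ centG r p n k)
    {o j : Fin k → Fin n} (hne : K o j ≠ 0) (x y : Fin n) :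
    Even (fiberCard o x + fiberCard j x + (fiberCard o y + fiberCard j y)) := by
  have hflip : monoMat n 1 (Pi.mulSingle x (-1) * Pi.mulSingle y (-1)) ∈ GSet r p n := by
    refine ⟨1, _, fun z => ?_, ?_, rfl⟩
    · simp only [Pi.mul_apply, Pi.mulSingle_apply]
      split_ifs <;> simp [hr.neg_one_pow]
    · simp [prod_mul_distrib]
  have h := kernelMap_comm_tensorPow_monoMat_iff.1 (hK _ hflip) o j
  simp only [Equiv.Perm.coe_one, id_comp, Pi.mul_apply, prod_mul_distrib,
    prod_mulSingle_neg_one_comp] at h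
  have hsign : (-1 : ℂ) ^ (fiberCard j x + fiberCard j y) =
      (-1) ^ (fiberCard o x + fiberCard o y) := by
    rw [pow_add, pow_add]
    exact mul_left_cancel₀ hne (h.trans (mul_comm _ _))
  rw [← neg_one_pow_eq_one_iff_even (R := ℂ) (by norm_num), add_add_add_comm, pow_add, ← hsign,
    ← pow_add, ← two_mul, pow_mul]
  norm_num

end Centralizer

section Blocks

variable {r p k : ℕ} {K : (Fin k → Fin (2 * k)) → (Fin k → Fin (2 * k)) → ℂ}

lemma sameBlock_of_kernel_ne_zero (hr : Even r)
    (hK : kernelMap (2 * k) k K ∈ centG r p (2 * k) k) {o j : Fin k → Fin (2 * k)}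
    (hne : K o j ≠ 0) (hinj : Injective o ∨ Injective j) : SameBlock o j := by
  have hcard : Fintype.card (Fin (2 * k)) = 2 * Fintype.card (Fin k) := by simp
  have hpar := forall_even_or_forall_odd (f := fun x => fiberCard o x + fiberCard j x)
    (even_fiberCard_add_of_kernel_ne_zero hr hK hne)
  rcases hinj with ho | hj
  · exact sameBlock_of_parity ho hcard hpar
  · exact (sameBlock_of_parity hj hcard (by simpa only [add_comm] using hpar)).symm

lemma sum_ite_injective_sumElim_comm_of_image_eq (hK : kernelMap (2 * k) k K ∈ centG r p (2 * k) k)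
    {o j : Fin k → Fin (2 * k)} (ho : Injective o) (hj : Injective j)
    (himg : univ.image j = univ.image o) :
    ∑ i, (if Injective (Sum.elim i o) then K i j else 0) =
      ∑ i, (if Injective (Sum.elim j i) then K o i else 0) := by
  refine sum_congr rfl fun i _ => ?_
  have hcond : Injective (Sum.elim i o) ↔ Injective (Sum.elim j i) := by
    rw [injective_sumElim_iff_disjoint, injective_sumElim_iff_disjoint, himg, disjoint_comm]
    simp [ho, hj]
  rw [if_congr hcond rfl rfl]
  split_ifs with hi
  · obtain ⟨π, hπj, hπi⟩ := exists_perm_comp_eq_of_bijective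
      (bijective_of_injective_sumElim hi) (bijective_of_injective_sumElim (hcond.2 hi))
    rw [← kernel_perm_comp_eq hK π i j, hπi, hπj]
  · rfl

lemma sum_ite_injective_sumElim_comm_of_injective_sumElim
    (hK : kernelMap (2 * k) k K ∈ centG r p (2 * k) k) {o j : Fin k → Fin (2 * k)}
    (hjo : Injective (Sum.elim j o)) :
    ∑ i, (if Injective (Sum.elim i o) then K i j else 0) =
      ∑ i, (if Injective (Sum.elim j i) then K o i else 0) := by
  have hoj := injective_sumElim_comm.1 hjo
  obtain ⟨ho, hj, -⟩ := Sum.elim_injective.1 hoj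
  simp_rw [injective_sumElim_comm (u := j)]
  rw [sum_ite_injective_sumElim_eq_sum_perm (bijective_of_injective_sumElim hjo),
    sum_ite_injective_sumElim_eq_sum_perm (bijective_of_injective_sumElim hoj),
    ← Equiv.sum_comp (Equiv.inv (Equiv.Perm (Fin k)))]
  refine sum_congr rfl fun σ _ => ?_
  have hbij : Bijective (Sum.elim (o ∘ σ) j) := bijective_of_injective_sumElim <|
    Sum.elim_injective.2 ⟨ho.comp σ.injective, hj, fun a _ => (Sum.elim_injective.1 hoj).2.2 _ _⟩
  obtain ⟨π, hπj, -⟩ := exists_perm_comp_eq_of_bijective (bijective_of_injective_sumElim hjo) hbij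
  calc K (j ∘ ⇑σ⁻¹) j = K (π ∘ j ∘ ⇑σ⁻¹) (π ∘ j) := (kernel_perm_comp_eq hK π _ _).symm
    _ = K o (o ∘ σ) := by rw [← comp_assoc, hπj, comp_assoc]; simp

lemma sum_ite_injective_sumElim_comm (hr : Even r)
    (hK : kernelMap (2 * k) k K ∈ centG r p (2 * k) k) (o j : Fin k → Fin (2 * k)) :
    ∑ i, (if Injective (Sum.elim i o) then K i j else 0) =
      ∑ i, (if Injective (Sum.elim j i) then K o i else 0) := by
  by_cases hblock : SameBlock o j
  · obtain ⟨ho, hj, himg | himg⟩ := hblock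
    · exact sum_ite_injective_sumElim_comm_of_image_eq hK ho hj himg
    · exact sum_ite_injective_sumElim_comm_of_injective_sumElim hK <|
        injective_sumElim_iff_disjoint.2 ⟨hj, ho, himg ▸ disjoint_compl_left⟩
  rw [sum_eq_zero fun i _ => ?_, sum_eq_zero fun i _ => ?_]
  · split_ifs with hi
    · by_contra hne
      have hji := sameBlock_of_injective_sumElim hi
      exact hblock ((sameBlock_of_kernel_ne_zero hr hK hne (.inr hji.2.1)).trans hji.symm)
    · rfl
  · split_ifs with hi
    · by_contra hne
      have hio := sameBlock_of_injective_sumElim hi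
      exact hblock (hio.symm.trans (sameBlock_of_kernel_ne_zero hr hK hne (.inl hio.1)))
    · rfl

end Blocks

lemma phiX_singletonSP (n k : ℕ) :
    phiX n k (singletonSP k) =
      kernelMap n k fun o i => if Injective (Sum.elim i o) then 1 else 0 := by
  unfold phiX coeX
  congr 1
  funext o i
  refine if_congr ⟨fun h a b hab => (h a b).2 hab, fun h a b => h.eq_iff.symm⟩ rfl rfl

lemma Mop_mem_centG (k : ℕ) : Mop k ∈ centG 2 2 (2 * k) k := by
  rintro _ ⟨π, a, ha, hprod, rfl⟩
  rw [Mop, phiX_singletonSP, kernelMap_comm_tensorPow_monoMat_iff]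
  intro o j
  simp only [← Sum.comp_elim, π.comp_injective]
  split_ifs with h
  · have hprod' : (∏ t, a (j t)) * ∏ t, a (o t) = 1 := by
      have := (bijective_of_injective_sumElim h).prod_comp a
      rw [Fintype.prod_sum_type] at this
      simp only [Sum.elim_inl, Sum.elim_inr] at this
      simpa [this] using hprod
    have hsq : (∏ t, a (j t)) ^ 2 = 1 := by
      rw [← prod_pow]
      simp [ha]
    linear_combination (-∏ t, a (j t)) * hprod' + (∏ t, a (o t)) * hsq
  · simp

lemma Mop_comm_of_mem_centG {r p k : ℕ} (hr : Even r) {F : TP (2 * k) k →ₗ[ℂ] TP (2 * k) k}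
    (hF : F ∈ centG r p (2 * k) k) : Mop k ∘ₗ F = F ∘ₗ Mop k := by
  obtain ⟨K, rfl⟩ := exists_eq_kernelMap F
  rw [Mop, phiX_singletonSP, kernelMap_comp, kernelMap_comp]
  congr 1
  funext o j
  simp only [ite_mul, one_mul, zero_mul, mul_ite, mul_one, mul_zero]
  exact sum_ite_injective_sumElim_comm hr hF o j

theorem statement18_general (k : ℕ) :
    (∀ g ∈ GSet 2 2 (2 * k),
      Mop k ∘ₗ tensorPow (2 * k) k g = tensorPow (2 * k) k g ∘ₗ Mop k) ∧
    (∀ F : TP (2 * k) k →ₗ[ℂ] TP (2 * k) k,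
      (∀ g ∈ GSet 2 2 (2 * k),
        F ∘ₗ tensorPow (2 * k) k g = tensorPow (2 * k) k g ∘ₗ F) →
      Mop k ∘ₗ F = F ∘ₗ Mop k) :=
  ⟨Mop_mem_centG k, fun _ hF => Mop_comm_of_mem_centG even_two hF⟩

/-- `M_{k,2,2}` commutes with the diagonal action of `G(2,2,2k)`
on `V^{⊗k}` and with every endomorphism commuting with that action; that is, it is a
central element of the centralizer algebra `End_{G(2,2,2k)}(V^{⊗k})`. -/
theorem statement18 (k : ℕ) (hk : 0 < k) :
    (∀ g ∈ GSet 2 2 (2 * k),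
      Mop k ∘ₗ tensorPow (2 * k) k g = tensorPow (2 * k) k g ∘ₗ Mop k) ∧
    (∀ F : TP (2 * k) k →ₗ[ℂ] TP (2 * k) k,
      (∀ g ∈ GSet 2 2 (2 * k),
        F ∘ₗ tensorPow (2 * k) k g = tensorPow (2 * k) k g ∘ₗ F) →
      Mop k ∘ₗ F = F ∘ₗ Mop k) :=
  statement18_general k

end Tanabe
end
end
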